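/- Let A₁,…,A_n be diagonal r×r complex matrices, β a real diagonal matrix, μ_i the diagonal entries of A₁ and β_i of β. On the punctured unit disk consider the flat connection D = d + ∑_{i=1}^n A_i dz/z^i − β dr/r on the trivial bundle with hermitian metric making the frame (e_i) orthonormal, where e_i = |z|^{-Im μ_i} exp(∑_{j=2}^n (−A_j*/(2(j−1)z̄^{j−1}) + A_j/(2(j−1)z^{j−1}))) τ_i/|z|^{β_i}. Then in the frame (e_i): the unitary part is D⁺ = d + Re(A₁) i dθ, and the Higgs field of the associated Higgs pair is θ = (1/2)∑_{i=1}^n A_i dz/z^i − (β/2) dz/z, with ∂̄-operator ∂̄ − (1/2)Re(A₁) dz̄/z̄; in particular the pseudo-curvature G_D = −2(D'')² vanishes, so this is a solution of Hitchin's selfduality equations. -/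

import Mathlib

/-!
With `c = -i Im μ - β` and `A = ∑_{j≥2} -a_j / (2(j-1) w^{j-1})`, a primitive of
`½ ∑_{j≥2} a_j / w^j`, the frame function is `s = exp (c log |w| + Ā - A)`. Near `z ≠ 0` the
function `ℓ(w) = log (w / z)` is holomorphic and `log |w| = log |z| + (ℓ + ℓ̄)/2`, so
`s = exp (H + K̄)` with `H = c log |z| + (c/2) ℓ - A` and `K = (c̄/2) ℓ + A` holomorphic.
Hence `∂s/s = H' = c/(2z) - A'` and `∂̄s/s = conj K' = c/(2z̄) + conj A'`. In `Q - R̄` the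
irregular terms `2A' = ∑_{j≥2} a_j/z^j` cancel against those of the connection, leaving
`(a₁ + (c - c̄)/2)/z = Re μ / z`; in `Q + R̄` only `c + c̄ = -2β` survives. The Higgs
coefficient is holomorphic on the punctured disk, so its `∂̄` vanishes.
-/

open Metric Complex

/-- Wirtinger derivative `∂f/∂z = (∂_x f − i ∂_y f)/2`. -/
noncomputable def wdz (f : ℂ → ℂ) (z : ℂ) : ℂ :=
  (fderiv ℝ f z 1 - Complex.I * fderiv ℝ f z Complex.I) / 2

/-- Wirtinger derivative `∂f/∂z̄ = (∂_x f + i ∂_y f)/2`. -/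
noncomputable def wdzbar (f : ℂ → ℂ) (z : ℂ) : ℂ :=
  (fderiv ℝ f z 1 + Complex.I * fderiv ℝ f z Complex.I) / 2

open ComplexConjugate

section Wirtinger

variable {f : ℂ → ℂ} {z : ℂ}

theorem wdz_wdzbar_of_hasFDerivAt {L : ℂ →L[ℝ] ℂ} (hf : HasFDerivAt f L z) {p q : ℂ}
    (hL : ∀ v, L v = v * p + conj v * q) : wdz f z = p ∧ wdzbar f z = q := by
  simp only [wdz, wdzbar, hf.fderiv, hL, conj_I, map_one]
  constructor
  · linear_combination (q - p) / 2 * I_sq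
  · linear_combination (p - q) / 2 * I_sq

theorem wdzbar_eq_zero_of_differentiableAt (hf : DifferentiableAt ℂ f z) : wdzbar f z = 0 :=
  (wdz_wdzbar_of_hasFDerivAt (hf.hasDerivAt.hasFDerivAt.restrictScalars ℝ) (p := deriv f z)
    fun v => by simp).2

theorem wdz_wdzbar_of_eventuallyEq_exp_add_conj {H K : ℂ → ℂ} {H' K' : ℂ}
    (hH : HasDerivAt H H' z) (hK : HasDerivAt K K' z)
    (hf : f =ᶠ[nhds z] fun w => exp (H w + conj (K w))) :
    wdz f z = f z * H' ∧ wdzbar f z = f z * conj K' := by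
  have hexp := ((hasDerivAt_exp _).hasFDerivAt.restrictScalars ℝ).comp z
    ((hH.hasFDerivAt.restrictScalars ℝ).add
      (conjCLE.toContinuousLinearMap.hasFDerivAt.comp z (hK.hasFDerivAt.restrictScalars ℝ)))
  refine wdz_wdzbar_of_hasFDerivAt (hexp.congr_of_eventuallyEq hf) fun v => ?_
  simp only [ContinuousLinearMap.comp_apply, add_apply, Pi.add_apply, Function.comp_apply,
    ContinuousLinearMap.coe_restrictScalars', ContinuousLinearMap.toSpanSingleton_apply,
    ContinuousLinearEquiv.coe_coe, ContinuousAlgEquiv.coeCLE_apply, conjCAE_apply, smul_eq_mul,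
    map_mul, hf.eq_of_nhds]
  ring

end Wirtinger

section Frame

variable (n : ℕ) (a : ℕ → ℂ)

noncomputable def irregularPrimitive (w : ℂ) : ℂ :=
  ∑ j ∈ Finset.Icc 2 n, -a j / (2 * ((j : ℂ) - 1) * w ^ (j - 1))

theorem hasDerivAt_irregularPrimitive {z : ℂ} (hz : z ≠ 0) :
    HasDerivAt (irregularPrimitive n a) ((∑ j ∈ Finset.Icc 2 n, a j / z ^ j) / 2) z := by
  rw [Finset.sum_div]
  refine HasDerivAt.fun_sum fun j hj => ?_
  obtain ⟨m, rfl⟩ : ∃ m, j = m + 2 := ⟨j - 2, by grind⟩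
  have hm : (m : ℂ) + 1 ≠ 0 := by exact_mod_cast m.succ_ne_zero
  have hcoef : ((m + 2 : ℕ) : ℂ) - 1 = m + 1 := by push_cast; ring
  simp only [hcoef, show m + 2 - 1 = m + 1 by omega]
  have h := (hasDerivAt_const z (-a (m + 2))).div
    ((hasDerivAt_pow (m + 1) z).const_mul (2 * ((m : ℂ) + 1)))
    (mul_ne_zero (mul_ne_zero two_ne_zero hm) (pow_ne_zero _ hz))
  refine h.congr_deriv ?_
  push_cast
  field_simp
  ring

variable (β : ℝ)

noncomputable def frame (w : ℂ) : ℂ :=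
  ((‖w‖ : ℂ) ^ (-((a 1).im : ℂ) * I)) *
    exp (∑ j ∈ Finset.Icc 2 n,
      (-(conj (a j)) / (2 * ((j : ℂ) - 1) * (conj w) ^ (j - 1))
        + a j / (2 * ((j : ℂ) - 1) * w ^ (j - 1)))) *
    ((‖w‖ : ℂ) ^ (-(β : ℂ)))

theorem frame_eq_exp {w : ℂ} (hw : w ≠ 0) :
    frame n a β w = exp ((-((a 1).im : ℂ) * I - β) * Real.log ‖w‖
      + (conj (irregularPrimitive n a w) - irregularPrimitive n a w)) := by
  have hnorm : (‖w‖ : ℂ) ≠ 0 := by simpa using hw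
  have hsum : (∑ j ∈ Finset.Icc 2 n,
      (-(conj (a j)) / (2 * ((j : ℂ) - 1) * (conj w) ^ (j - 1))
        + a j / (2 * ((j : ℂ) - 1) * w ^ (j - 1))))
      = conj (irregularPrimitive n a w) - irregularPrimitive n a w := by
    rw [irregularPrimitive, map_sum, ← Finset.sum_sub_distrib]
    refine Finset.sum_congr rfl fun j _ => ?_
    simp only [map_div₀, map_neg, map_mul, map_pow, map_sub, map_ofNat, map_natCast, map_one]
    ring
  rw [frame, hsum, cpow_def_of_ne_zero hnorm, cpow_def_of_ne_zero hnorm,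
    ← ofReal_log (norm_nonneg w), ← exp_add, ← exp_add]
  congr 1
  ring

theorem frame_ne_zero {w : ℂ} (hw : w ≠ 0) : frame n a β w ≠ 0 := by
  rw [frame_eq_exp n a β hw]
  exact exp_ne_zero _

theorem wdz_wdzbar_frame_div {z : ℂ} (hz : z ≠ 0) :
    wdz (frame n a β) z / frame n a β z =
        (-((a 1).im : ℂ) * I - β) / (2 * z) - (∑ j ∈ Finset.Icc 2 n, a j / z ^ j) / 2 ∧
      wdzbar (frame n a β) z / frame n a β z =
        (-((a 1).im : ℂ) * I - β) / (2 * conj z)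
          + conj (∑ j ∈ Finset.Icc 2 n, a j / z ^ j) / 2 := by
  set c : ℂ := -((a 1).im : ℂ) * I - β
  set A := irregularPrimitive n a
  set P := (∑ j ∈ Finset.Icc 2 n, a j / z ^ j) / 2
  have hA : HasDerivAt A P z := hasDerivAt_irregularPrimitive n a hz
  have hL : HasDerivAt (fun w => log (w / z)) z⁻¹ z := by
    refine (((hasDerivAt_id z).div_const z).clog (by simp [hz])).congr_deriv ?_
    simp [hz]
  have hlog : ∀ w ≠ 0,
      (Real.log ‖w‖ : ℂ) = Real.log ‖z‖ + (log (w / z) + conj (log (w / z))) / 2 := by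
    intro w hw
    rw [add_conj, log_re, norm_div, Real.log_div (by simpa using hw) (by simpa using hz)]
    push_cast
    ring
  have hH : HasDerivAt (fun w => c * Real.log ‖z‖ + c / 2 * log (w / z) - A w)
      (c / (2 * z) - P) z := by
    refine (((hasDerivAt_const z _).add (hL.const_mul (c / 2))).sub hA).congr_deriv ?_
    field_simp
    ring
  have hK : HasDerivAt (fun w => conj c / 2 * log (w / z) + A w) (conj c / (2 * z) + P) z := by
    refine ((hL.const_mul (conj c / 2)).add hA).congr_deriv ?_
    field_simp
  obtain ⟨hdz, hdzbar⟩ := wdz_wdzbar_of_eventuallyEq_exp_add_conj (f := frame n a β) hH hK (by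
    filter_upwards [compl_singleton_mem_nhds hz] with w hw
    rw [frame_eq_exp n a β hw, hlog w hw]
    congr 1
    simp only [map_add, map_mul, map_div₀, conj_conj, map_ofNat]
    ring)
  rw [hdz, hdzbar, mul_div_cancel_left₀ _ (frame_ne_zero n a β hz),
    mul_div_cancel_left₀ _ (frame_ne_zero n a β hz)]
  refine ⟨rfl, ?_⟩
  simp only [map_add, map_div₀, map_mul, conj_conj, map_ofNat, P]

end Frame

/-- The local model (diagonal case, stated entrywise): in the unitary frame
`e = |z|^{-i·Im μ} exp(∑_{j≥2}(−ā_j/(2(j−1)z̄^{j-1}) + a_j/(2(j−1)z^{j-1}))) τ/|z|^β`,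
the connection `D = d + ∑ a_i dz/z^i − β dr/r` has unitary part `d + Re(μ) i dθ`
(dz-coefficient `Re μ/(2z)`, dz̄-coefficient `−Re μ/(2z̄)`), Higgs field
`θ = (1/2)∑ a_i dz/z^i − (β/2) dz/z`, and the pseudo-curvature vanishes
(`∂̄` of the Higgs coefficient is zero), so this solves Hitchin's equations. -/
theorem local_model_frame (n : ℕ) (hn : 1 ≤ n) (a : ℕ → ℂ) (β : ℝ) :
    ∀ z : ℂ, z ≠ 0 → ‖z‖ < 1 →
      (let μ : ℂ := a 1
       let s : ℂ → ℂ := fun w =>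
         ((‖w‖ : ℂ) ^ (-(μ.im : ℂ) * Complex.I)) *
           Complex.exp (∑ j ∈ Finset.Icc 2 n,
             (-(starRingEnd ℂ (a j)) / (2 * ((j : ℂ) - 1) * (starRingEnd ℂ w) ^ (j - 1))
               + a j / (2 * ((j : ℂ) - 1) * w ^ (j - 1)))) *
           ((‖w‖ : ℂ) ^ (-(β : ℂ)))
       -- dz- and dz̄-coefficients of the connection form in the frame e = s·τ
       let Q : ℂ := (∑ i ∈ Finset.Icc 1 n, a i / z ^ i) + wdz s z / s z
       let R : ℂ := wdzbar s z / s z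
       -- unitary part D⁺ = d + Re(μ) i dθ
       ((Q - starRingEnd ℂ R) / 2 = (μ.re : ℂ) / (2 * z) ∧
        (R - starRingEnd ℂ Q) / 2 = -(μ.re : ℂ) / (2 * starRingEnd ℂ z)) ∧
       -- Higgs field θ = (1/2) ∑ a_i dz/z^i − (β/2) dz/z
       (Q + starRingEnd ℂ R) / 2
          = (∑ i ∈ Finset.Icc 1 n, a i / z ^ i) / 2 - (β : ℂ) / (2 * z) ∧
       -- vanishing of the pseudo-curvature: ∂̄θ = 0
       wdzbar (fun w => (∑ i ∈ Finset.Icc 1 n, a i / w ^ i) / 2 - (β : ℂ) / (2 * w)) z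
          = 0) := by
  intro z hz _ μ s Q R
  have hs : s = frame n a β := rfl
  obtain ⟨hQ, hR⟩ := wdz_wdzbar_frame_div n a β hz
  set P := ∑ j ∈ Finset.Icc 2 n, a j / z ^ j
  have hsum : ∑ i ∈ Finset.Icc 1 n, a i / z ^ i = a 1 / z + P := by
    rw [← Finset.insert_Icc_add_one_left_eq_Icc hn, Finset.sum_insert (by simp), pow_one]
    rfl
  have hQR : Q - conj R = μ.re / z := by
    simp only [Q, R, hs, hQ, hR, hsum, map_add, map_sub, map_div₀, map_mul, map_neg, map_ofNat,
      conj_conj, conj_ofReal, conj_I]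
    linear_combination (-1 / z) * re_add_im (a 1)
  refine ⟨⟨?_, ?_⟩, ?_, wdzbar_eq_zero_of_differentiableAt (by fun_prop (disch := simp [hz]))⟩
  · rw [hQR]
    ring
  · have hRQ := congrArg conj hQR
    simp only [map_sub, map_div₀, conj_conj, conj_ofReal] at hRQ
    linear_combination -hRQ / 2
  · simp only [Q, R, hs, hQ, hR, hsum, map_add, map_sub, map_div₀, map_mul, map_neg, map_ofNat,
      conj_conj, conj_ofReal, conj_I]
    ring
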